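/- For β ≥ 0 and z2 ≥ (√7−1)/3, the partial derivative of G(β,z2) with respect to z2 is nonnegative, where G(β,z2) = (z2²+z2+1−A)/((3+β)z2²+(2β+4)z2+2z2·A+2) with A = √((1+β)z2²+2(1+β)z2+1). -/

import Mathlib

/-!
Write `A = √((1+β)z² + 2(1+β)z + 1)`. Clearing the square root with `A² = (1+β)z² + 2(1+β)z + 1`,
the numerator `N'D - ND'` of the quotient rule becomes `P/A`, where `P` is a polynomial in `β, z, A`
whose only coefficient of indefinite sign is the coefficient `3z² + 2z - 2` of `βA`. Its positive
root is `(√7 - 1)/3`, so every term of `P` is nonnegative in the stated range.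
-/

open Real

section

variable (β : ℝ)

noncomputable def radicand (z : ℝ) : ℝ := (1 + β) * z ^ 2 + 2 * (1 + β) * z + 1

noncomputable def G (z : ℝ) : ℝ :=
  (z ^ 2 + z + 1 - √(radicand β z)) /
    ((3 + β) * z ^ 2 + (2 * β + 4) * z + 2 * z * √(radicand β z) + 2)

noncomputable def derivGNumerator (z A : ℝ) : ℝ :=
  z ^ 3 * (3 + 4 * β + β ^ 2) + z ^ 2 * (5 + 6 * β + 3 * β ^ 2) + 2 * z * (1 + β ^ 2)
    + A * (3 * z ^ 2 + 2 * z) + β * A * (3 * z ^ 2 + 2 * z - 2)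

variable {β}

theorem one_le_radicand (hβ : 0 ≤ β) {z : ℝ} (hz : 0 ≤ z) : 1 ≤ radicand β z := by
  have : 0 ≤ (1 + β) * z ^ 2 + 2 * (1 + β) * z := by positivity
  unfold radicand
  linarith

theorem hasDerivAt_sqrt_radicand {z : ℝ} (h : radicand β z ≠ 0) :
    HasDerivAt (fun z => √(radicand β z)) ((1 + β) * (z + 1) / √(radicand β z)) z := by
  have hr : HasDerivAt (radicand β) (2 * (1 + β) * (z + 1)) z := by
    have := (((hasDerivAt_pow 2 z).const_mul (1 + β)).add
      ((hasDerivAt_id z).const_mul (2 * (1 + β)))).add_const 1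
    exact this.congr_deriv (by ring)
  exact (hr.sqrt h).congr_deriv (by field_simp)

theorem quotient_rule_numerator_G_eq {z A : ℝ} (hA : A ≠ 0) (hA2 : A ^ 2 = radicand β z) :
    (2 * z + 1 - (1 + β) * (z + 1) / A) * ((3 + β) * z ^ 2 + (2 * β + 4) * z + 2 * z * A + 2) -
        (z ^ 2 + z + 1 - A) *
          ((3 + β) * (2 * z) + (2 * β + 4) + (2 * A + 2 * z * ((1 + β) * (z + 1) / A))) =
      derivGNumerator β z A / A := by
  unfold derivGNumerator
  unfold radicand at hA2
  field_simp
  linear_combination (2 * A + 2 * z ^ 2 + 6 * z + 2 * β * z + 2 * β + 2) * hA2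

theorem hasDerivAt_G (hβ : 0 ≤ β) {z : ℝ} (hz : 0 ≤ z) :
    HasDerivAt (G β) (derivGNumerator β z (√(radicand β z)) / √(radicand β z) /
      ((3 + β) * z ^ 2 + (2 * β + 4) * z + 2 * z * √(radicand β z) + 2) ^ 2) z := by
  have hr := one_le_radicand hβ hz
  have hA : 0 < √(radicand β z) := sqrt_pos.mpr (by linarith)
  have hD0 : (3 + β) * z ^ 2 + (2 * β + 4) * z + 2 * z * √(radicand β z) + 2 ≠ 0 := by
    positivity
  have hs := hasDerivAt_sqrt_radicand (β := β) (z := z) (by linarith)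
  have hN := (((hasDerivAt_pow 2 z).add (hasDerivAt_id z)).add_const 1).sub hs
  have hD := ((((hasDerivAt_pow 2 z).const_mul (3 + β)).add
    ((hasDerivAt_id z).const_mul (2 * β + 4))).add
      (((hasDerivAt_id z).const_mul 2).mul hs)).add_const 2
  refine (hN.div hD hD0).congr_deriv ?_
  rw [← quotient_rule_numerator_G_eq hA.ne' (sq_sqrt (by linarith))]
  simp only [Pi.add_apply, Pi.mul_apply, Pi.sub_apply, id, Nat.cast_ofNat]
  ring

theorem derivGNumerator_nonneg (hβ : 0 ≤ β) {z A : ℝ} (hz : 0 ≤ z) (hA : 0 ≤ A)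
    (hc : 0 ≤ 3 * z ^ 2 + 2 * z - 2) : 0 ≤ derivGNumerator β z A := by
  have hβA : 0 ≤ β * A * (3 * z ^ 2 + 2 * z - 2) := by positivity
  have hrest : 0 ≤ z ^ 3 * (3 + 4 * β + β ^ 2) + z ^ 2 * (5 + 6 * β + 3 * β ^ 2)
      + 2 * z * (1 + β ^ 2) + A * (3 * z ^ 2 + 2 * z) := by positivity
  unfold derivGNumerator
  linarith

end

theorem three_mul_sq_add_two_mul_sub_two_nonneg {z : ℝ} (hz : (√7 - 1) / 3 ≤ z) :
    0 ≤ 3 * z ^ 2 + 2 * z - 2 := by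
  have h7 : √7 ≤ 3 * z + 1 := by linarith
  nlinarith [sq_sqrt (show (0 : ℝ) ≤ 7 by norm_num), sqrt_nonneg 7]

theorem stmt_8 (β z2 : ℝ) (hβ : 0 ≤ β) (hz2 : (Real.sqrt 7 - 1) / 3 ≤ z2) :
    0 ≤ deriv (fun z : ℝ =>
      (z^2 + z + 1 - Real.sqrt ((1+β)*z^2 + 2*(1+β)*z + 1)) /
      ((3+β)*z^2 + (2*β+4)*z + 2*z*Real.sqrt ((1+β)*z^2 + 2*(1+β)*z + 1) + 2)) z2 := by
  have h7 : 1 ≤ √7 := one_le_sqrt.mpr (by norm_num)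
  have hz : 0 ≤ z2 := le_trans (by linarith) hz2
  change 0 ≤ deriv (G β) z2
  rw [(hasDerivAt_G hβ hz).deriv]
  have hP := derivGNumerator_nonneg hβ hz (sqrt_nonneg (radicand β z2))
    (three_mul_sq_add_two_mul_sub_two_nonneg hz2)
  exact div_nonneg (div_nonneg hP (sqrt_nonneg _)) (sq_nonneg _)
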